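/- Suppose L ⊆ S* defines a quasiregular normal form of G with constant c ≥ 0 which satisfies the f(n)-fellow traveler property. Then there exists a language L' ⊆ S* defining a quasiprefix-closed normal form of G with constant C = 4c which also satisfies the f(n)-fellow traveler property. -/

import Mathlib

/-- The alphabet `S = A ∪ A⁻¹` for a generating tuple of `m` elements:
a letter is a generator index together with a sign (`true` = the generator,
`false` = its inverse). -/
abbrev Letter (m : ℕ) := Fin m × Bool

/-- Evaluation of a letter in the group. -/
def evalLetter {G : Type*} [Group G] {m : ℕ} (A : Fin m → G) (l : Letter m) : G :=
  if l.2 then A l.1 else (A l.1)⁻¹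

/-- The canonical projection `π : S* → G`. -/
def wordEval {G : Type*} [Group G] {m : ℕ} (A : Fin m → G) (w : List (Letter m)) : G :=
  (w.map (evalLetter A)).prod

/-- The word metric `d_A` on `G` relative to `A`. -/
noncomputable def wordDist {G : Type*} [Group G] {m : ℕ} (A : Fin m → G) (g h : G) : ℕ :=
  sInf {n | ∃ w : List (Letter m), wordEval A w = g⁻¹ * h ∧ w.length = n}

/-- `L ⊆ S*` is a normal form of `G`: `π` restricted to `L` is a bijection onto `G`. -/
def IsNormalForm {G : Type*} [Group G] {m : ℕ} (A : Fin m → G)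
    (L : Set (List (Letter m))) : Prop :=
  ∀ g : G, ∃! w, w ∈ L ∧ wordEval A w = g

/-- The fellow-traveler function `s(n)` of a normal form `L`. -/
noncomputable def ftFun {G : Type*} [Group G] {m : ℕ} (A : Fin m → G)
    (L : Set (List (Letter m))) (n : ℕ) : ℕ :=
  sSup {d | ∃ t ≤ n, ∃ w₁ ∈ L, ∃ w₂ ∈ L, ∃ i : Fin m,
    wordEval A w₁ * A i = wordEval A w₂ ∧
    d = wordDist A (wordEval A (w₁.take t)) (wordEval A (w₂.take t))}

/-- `h ⪯ f` : there are positive integers `K, M` and `N₀ ≥ 0` with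
`h n ≤ K * f (M * n)` for all `n ≥ N₀`. -/
def FPreceq (h f : ℕ → ℝ) : Prop :=
  ∃ K M N₀ : ℕ, 0 < K ∧ 0 < M ∧ ∀ n ≥ N₀, h n ≤ (K : ℝ) * f (M * n)

/-- `h ≪ f` : there is an unbounded nondecreasing nonnegative function `t`
with `h·t ⪯ f`. -/
def FLl (h f : ℕ → ℝ) : Prop :=
  ∃ t : ℕ → ℝ, Monotone t ∧ (∀ n, 0 ≤ t n) ∧ (∀ C : ℝ, ∃ n, C < t n) ∧
    FPreceq (fun n => h n * t n) f

/-- A normal form is quasigeodesic if `|w| ≤ C (d_A(π(w)) + 1)` for all `w ∈ L`. -/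
def Quasigeodesic {G : Type*} [Group G] {m : ℕ} (A : Fin m → G)
    (L : Set (List (Letter m))) : Prop :=
  ∃ C : ℝ, 0 < C ∧ ∀ w ∈ L, (w.length : ℝ) ≤ C * ((wordDist A 1 (wordEval A w) : ℝ) + 1)

/-- A normal form is quasiregular with constant `c` if every prefix of a word of `L`
can be extended by a word of length at most `c` to a word of `L`. -/
def Quasiregular {m : ℕ} (L : Set (List (Letter m))) (c : ℕ) : Prop :=
  ∀ w ∈ L, ∀ u : List (Letter m), u <+: w → ∃ x : List (Letter m), x.length ≤ c ∧ u ++ x ∈ L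

/-- A normal form is quasiprefix-closed with constant `C`. -/
def QuasiPrefixClosed {m : ℕ} (L : Set (List (Letter m))) (C : ℕ) : Prop :=
  ∀ u v : List (Letter m), u ++ v ∈ L →
    ∃ x : List (Letter m), x <+: v ∧ x.length ≤ C ∧ u ++ x ∈ L

/-- A language is prefix-closed. -/
def PrefixClosed {m : ℕ} (L : Set (List (Letter m))) : Prop :=
  ∀ w ∈ L, ∀ u : List (Letter m), u <+: w → u ∈ L

/-!
Cut each word `w ∈ L` into blocks of length `c + 1` and, after every block but the last one
or two, insert a loop `x · (a a⁻¹)^k · x⁻¹` of length exactly `2c`, where `x`, `|x| ≤ c`,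
completes the prefix `u` of `w` ending there to a word `u · x ∈ L`. The padded word has the
same value as `w`. Padding `u · x` itself leaves its last block and `x` untouched, while the
loop following that block in the padded `w` starts with `x`; so the padded `u · x` is literally
a prefix of the padded `w`. Such prefixes end in every window of length `4c`, which gives
quasiprefix-closedness with constant `4c`.

All segments have length `3c + 1`, so position `t` of a padded word lies within `3c` of
position `⌊t / (3c + 1)⌋ (c + 1) ≤ t` of the original word, and the fellow-traveler function
grows by at most `6c`. Unless all generators are trivial, `s(n) ≥ 1` for large `n`, so this
additive constant is absorbed into the multiplicative one. For `c = 0`, or an empty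
alphabet, `L` is already prefix-closed.
-/

section Words

variable {G : Type*} [Group G] {m : ℕ} (A : Fin m → G)

theorem wordEval_append (u v : List (Letter m)) :
    wordEval A (u ++ v) = wordEval A u * wordEval A v := by
  simp [wordEval]

theorem wordEval_cons (a : Letter m) (w : List (Letter m)) :
    wordEval A (a :: w) = evalLetter A a * wordEval A w := by
  simp [wordEval]

def invWord (w : List (Letter m)) : List (Letter m) :=
  (w.map fun a => (a.1, !a.2)).reverse

@[simp]
theorem length_invWord (w : List (Letter m)) : (invWord w).length = w.length := by
  simp [invWord]

theorem wordEval_invWord (w : List (Letter m)) :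
    wordEval A (invWord w) = (wordEval A w)⁻¹ := by
  induction w with
  | nil => simp [invWord, wordEval]
  | cons a w ih =>
    have hflip : wordEval A [(a.1, !a.2)] = (evalLetter A a)⁻¹ := by
      obtain ⟨i, _ | _⟩ := a <;> simp [wordEval, evalLetter]
    have hinv : invWord (a :: w) = invWord w ++ [(a.1, !a.2)] := by simp [invWord]
    rw [hinv, wordEval_append, ih, hflip, wordEval_cons A a w, mul_inv_rev]

theorem wordEval_eq_one_of_forall_eq_one (h : ∀ i, A i = 1) (w : List (Letter m)) :
    wordEval A w = 1 := by
  induction w with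
  | nil => rfl
  | cons a w ih => cases ha : a.2 <;> simp [wordEval_cons, ih, evalLetter, ha, h]

theorem IsNormalForm.surjective {L : Set (List (Letter m))} (hL : IsNormalForm A L) :
    Function.Surjective (wordEval A) :=
  fun g => (hL g).exists.imp fun _ hw => hw.2

theorem IsNormalForm.image {L : Set (List (Letter m))} (hL : IsNormalForm A L)
    {φ : List (Letter m) → List (Letter m)} (hφ : ∀ w, wordEval A (φ w) = wordEval A w) :
    IsNormalForm A (φ '' L) := by
  intro g
  obtain ⟨w, ⟨hw, rfl⟩, huniq⟩ := hL g
  refine ⟨φ w, ⟨Set.mem_image_of_mem φ hw, hφ w⟩, ?_⟩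
  rintro _ ⟨⟨v, hv, rfl⟩, hval⟩
  rw [huniq v ⟨hv, (hφ v).symm.trans hval⟩]

end Words

section WordDist

variable {G : Type*} [Group G] {m : ℕ} {A : Fin m → G}

theorem wordDist_le {g h : G} {z : List (Letter m)} (hz : wordEval A z = g⁻¹ * h) :
    wordDist A g h ≤ z.length :=
  Nat.sInf_le ⟨z, hz, rfl⟩

theorem exists_wordEval_length_eq_wordDist (hA : Function.Surjective (wordEval A)) (g h : G) :
    ∃ z : List (Letter m), wordEval A z = g⁻¹ * h ∧ z.length = wordDist A g h := by
  obtain ⟨w, hw⟩ := hA (g⁻¹ * h)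
  exact Nat.sInf_mem
    (s := {n | ∃ z : List (Letter m), wordEval A z = g⁻¹ * h ∧ z.length = n})
    ⟨w.length, w, hw, rfl⟩

theorem wordDist_self (g : G) : wordDist A g g = 0 :=
  Nat.le_zero.mp (wordDist_le (z := []) (by simp [wordEval]))

theorem wordDist_eq_zero_iff (hA : Function.Surjective (wordEval A)) {g h : G} :
    wordDist A g h = 0 ↔ g = h := by
  refine ⟨fun h0 => ?_, fun hgh => hgh ▸ wordDist_self g⟩
  obtain ⟨z, hz, hlen⟩ := exists_wordEval_length_eq_wordDist hA g h
  rw [List.length_eq_zero_iff.mp (hlen.trans h0)] at hz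
  exact inv_mul_eq_one.mp hz.symm

theorem wordDist_comm (hA : Function.Surjective (wordEval A)) (g h : G) :
    wordDist A g h = wordDist A h g := by
  have key : ∀ a b : G, wordDist A a b ≤ wordDist A b a := fun a b => by
    obtain ⟨z, hz, hlen⟩ := exists_wordEval_length_eq_wordDist hA b a
    refine hlen ▸ length_invWord z ▸ wordDist_le ?_
    rw [wordEval_invWord, hz, mul_inv_rev, inv_inv]
  exact (key g h).antisymm (key h g)

theorem wordDist_triangle (hA : Function.Surjective (wordEval A)) (g k h : G) :
    wordDist A g h ≤ wordDist A g k + wordDist A k h := by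
  obtain ⟨z₁, hz₁, hl₁⟩ := exists_wordEval_length_eq_wordDist hA g k
  obtain ⟨z₂, hz₂, hl₂⟩ := exists_wordEval_length_eq_wordDist hA k h
  calc wordDist A g h ≤ (z₁ ++ z₂).length :=
        wordDist_le (by rw [wordEval_append, hz₁, hz₂]; group)
    _ = wordDist A g k + wordDist A k h := by rw [List.length_append, hl₁, hl₂]

theorem wordDist_wordEval_append_le (u z : List (Letter m)) :
    wordDist A (wordEval A (u ++ z)) (wordEval A u) ≤ z.length :=
  length_invWord z ▸ wordDist_le (by rw [wordEval_invWord, wordEval_append]; group)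

end WordDist

section FellowTraveler

variable {G : Type*} [Group G] {m : ℕ} {A : Fin m → G} {L : Set (List (Letter m))}

theorem le_ftFun {n t : ℕ} (ht : t ≤ n) {w₁ w₂ : List (Letter m)} (hw₁ : w₁ ∈ L)
    (hw₂ : w₂ ∈ L) {i : Fin m} (hadj : wordEval A w₁ * A i = wordEval A w₂) :
    wordDist A (wordEval A (w₁.take t)) (wordEval A (w₂.take t)) ≤ ftFun A L n := by
  refine le_csSup ⟨2 * n, ?_⟩ ⟨t, ht, w₁, hw₁, w₂, hw₂, i, hadj, rfl⟩
  rintro _ ⟨t, ht, w₁, -, w₂, -, -, -, rfl⟩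
  calc _ ≤ (invWord (w₁.take t) ++ w₂.take t).length :=
        wordDist_le (by rw [wordEval_append, wordEval_invWord])
    _ ≤ 2 * n := by simp only [List.length_append, length_invWord, List.length_take]; omega

theorem ftFun_eq_zero_of_forall_eq_one (hA : Function.Surjective (wordEval A))
    (h1 : ∀ i, A i = 1) (n : ℕ) : ftFun A L n = 0 := by
  refine Nat.le_zero.mp (csSup_le' ?_)
  rintro _ ⟨-, -, w₁, -, w₂, -, -, -, rfl⟩
  have htriv : ∀ g : G, g = 1 := fun g => by
    obtain ⟨w, rfl⟩ := hA g
    exact wordEval_eq_one_of_forall_eq_one A h1 w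
  rw [htriv (wordEval A (w₁.take _)), htriv (wordEval A (w₂.take _)), wordDist_self]

theorem eventually_one_le_ftFun (hL : IsNormalForm A L) {i : Fin m} (hi : A i ≠ 1) :
    ∃ N, ∀ n ≥ N, 1 ≤ ftFun A L n := by
  obtain ⟨w₁, ⟨hw₁, hv₁⟩, -⟩ := hL 1
  obtain ⟨w₂, ⟨hw₂, hv₂⟩, -⟩ := hL (A i)
  refine ⟨max w₁.length w₂.length, fun n hn => ?_⟩
  have hdist := le_ftFun hn hw₁ hw₂ (i := i) (by rw [hv₁, hv₂, one_mul])
  rw [List.take_of_length_le (le_max_left _ _), List.take_of_length_le (le_max_right _ _),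
    hv₁, hv₂] at hdist
  have hpos : wordDist A 1 (A i) ≠ 0 :=
    fun h0 => hi ((wordDist_eq_zero_iff hL.surjective).mp h0).symm
  omega

end FellowTraveler

theorem FPreceq.of_le_mul {h h' f : ℕ → ℝ} (hf : FPreceq h f) {C N : ℕ} (hC : 0 < C)
    (hle : ∀ n ≥ N, h' n ≤ C * h n) : FPreceq h' f := by
  obtain ⟨K, M, N₀, hK, hM, hb⟩ := hf
  refine ⟨C * K, M, max N N₀, Nat.mul_pos hC hK, hM, fun n hn => ?_⟩
  calc h' n ≤ C * h n := hle n (le_of_max_le_left hn)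
    _ ≤ C * (K * f (M * n)) := by gcongr; exact hb n (le_of_max_le_right hn)
    _ = ((C * K : ℕ) : ℝ) * f (M * n) := by push_cast; ring

theorem PrefixClosed.quasiPrefixClosed {m : ℕ} {L : Set (List (Letter m))} (hL : PrefixClosed L)
    (C : ℕ) : QuasiPrefixClosed L C :=
  fun u v huv =>
    ⟨[], List.nil_prefix, Nat.zero_le C, by simpa using hL _ huv u (List.prefix_append u v)⟩

theorem Quasiregular.prefixClosed {m : ℕ} {L : Set (List (Letter m))} (hL : Quasiregular L 0) :
    PrefixClosed L := by
  intro w hw u hu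
  obtain ⟨x, hx, hux⟩ := hL w hw u hu
  rwa [List.length_eq_zero_iff.mp (Nat.le_zero.mp hx), List.append_nil] at hux

theorem prefixClosed_of_isEmpty {m : ℕ} [IsEmpty (Fin m)] (L : Set (List (Letter m))) :
    PrefixClosed L := by
  intro w hw u _
  rwa [Subsingleton.elim u w]

theorem quasiPrefixClosed_of_exists_prefix_mem {m : ℕ} {L : Set (List (Letter m))} {C : ℕ}
    (h : ∀ w ∈ L, ∀ t ≤ w.length,
      ∃ p ∈ L, p <+: w ∧ t ≤ p.length ∧ p.length ≤ t + C) :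
    QuasiPrefixClosed L C := by
  intro u v huv
  obtain ⟨p, hp, hpre, hlo, hhi⟩ := h _ huv u.length (by simp)
  obtain ⟨x, rfl⟩ := List.prefix_of_prefix_length_le (List.prefix_append u v) hpre hlo
  refine ⟨x, (List.prefix_append_right_inj u).mp hpre, ?_, hp⟩
  simp only [List.length_append] at hhi
  omega

namespace Padding

variable {G : Type*} [Group G] {m : ℕ} (A : Fin m → G) (L : Set (List (Letter m))) (c : ℕ)
  (i₀ : Fin m)

open Classical in
noncomputable def completion (u : List (Letter m)) : List (Letter m) :=
  if h : ∃ x : List (Letter m), x.length ≤ c ∧ u ++ x ∈ L then h.choose else []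

theorem length_completion_le (u : List (Letter m)) : (completion L c u).length ≤ c := by
  unfold completion
  split_ifs with h
  exacts [h.choose_spec.1, Nat.zero_le c]

theorem append_completion_mem {u : List (Letter m)}
    (h : ∃ x : List (Letter m), x.length ≤ c ∧ u ++ x ∈ L) :
    u ++ completion L c u ∈ L := by
  rw [completion, dif_pos h]
  exact h.choose_spec.2

noncomputable def detour (u : List (Letter m)) : List (Letter m) :=
  completion L c u ++
    (List.replicate (c - (completion L c u).length) [(i₀, true), (i₀, false)]).flatten ++
    invWord (completion L c u)

theorem length_detour (u : List (Letter m)) : (detour L c i₀ u).length = 2 * c := by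
  have := length_completion_le L c u
  simp [detour]
  omega

theorem wordEval_detour (u : List (Letter m)) : wordEval A (detour L c i₀ u) = 1 := by
  have hfill (k : ℕ) :
      wordEval A (List.replicate k [(i₀, true), (i₀, false)]).flatten = 1 := by
    simp [wordEval, List.map_flatten, List.prod_flatten, evalLetter]
  rw [detour, wordEval_append, wordEval_append, hfill, mul_one, wordEval_invWord, mul_inv_cancel]

noncomputable def segment (w : List (Letter m)) (j : ℕ) : List (Letter m) :=
  (w.take ((j + 1) * (c + 1))).drop (j * (c + 1)) ++ detour L c i₀ (w.take ((j + 1) * (c + 1)))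

noncomputable def segments (w : List (Letter m)) (k : ℕ) : List (Letter m) :=
  ((List.range k).map (segment L c i₀ w)).flatten

def numBlocks (w : List (Letter m)) : ℕ := w.length / (c + 1) - 1

noncomputable def padded (w : List (Letter m)) : List (Letter m) :=
  segments L c i₀ w (numBlocks c w) ++ w.drop (numBlocks c w * (c + 1))

theorem segments_succ (w : List (Letter m)) (k : ℕ) :
    segments L c i₀ w (k + 1) = segments L c i₀ w k ++ segment L c i₀ w k := by
  simp [segments, List.range_succ]

theorem numBlocks_mul_le (w : List (Letter m)) : numBlocks c w * (c + 1) ≤ w.length :=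
  (Nat.mul_le_mul_right _ (Nat.sub_le _ _)).trans (Nat.div_mul_le_self _ _)

theorem length_lt_numBlocks_add_two_mul (w : List (Letter m)) :
    w.length < (numBlocks c w + 2) * (c + 1) := by
  have := Nat.lt_div_mul_add (a := w.length) (Nat.succ_pos c)
  have : w.length / (c + 1) ≤ numBlocks c w + 1 := by unfold numBlocks; omega
  nlinarith

theorem wordEval_segments (w : List (Letter m)) (k : ℕ) :
    wordEval A (segments L c i₀ w k) = wordEval A (w.take (k * (c + 1))) := by
  induction k with
  | zero => simp [segments, wordEval]
  | succ k ih =>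
    have hsplit : w.take (k * (c + 1)) ++ (w.take ((k + 1) * (c + 1))).drop (k * (c + 1)) =
        w.take ((k + 1) * (c + 1)) := by
      conv_rhs => rw [← List.take_append_drop (k * (c + 1)) (w.take ((k + 1) * (c + 1)))]
      rw [List.take_take, Nat.min_eq_left (by nlinarith)]
    rw [segments_succ, segment, wordEval_append, wordEval_append, wordEval_detour, mul_one, ih,
      ← wordEval_append, hsplit]

theorem length_segments (w : List (Letter m)) {k : ℕ} (hk : k ≤ numBlocks c w) :
    (segments L c i₀ w k).length = k * (3 * c + 1) := by
  induction k with
  | zero => simp [segments]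
  | succ k ih =>
    have hlen : (k + 1) * (c + 1) ≤ w.length :=
      (Nat.mul_le_mul_right _ hk).trans (numBlocks_mul_le c w)
    rw [segments_succ, List.length_append, ih (by omega), segment, List.length_append,
      length_detour, List.length_drop, List.length_take, Nat.min_eq_left hlen]
    ring_nf
    omega

theorem wordEval_padded (w : List (Letter m)) : wordEval A (padded L c i₀ w) = wordEval A w := by
  rw [padded, wordEval_append, wordEval_segments, ← wordEval_append, List.take_append_drop]

theorem length_padded (w : List (Letter m)) : (padded L c i₀ w).length =
    numBlocks c w * (3 * c + 1) + (w.length - numBlocks c w * (c + 1)) := by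
  rw [padded, List.length_append, length_segments L c i₀ w le_rfl, List.length_drop]

theorem length_padded_lt (w : List (Letter m)) :
    (padded L c i₀ w).length < numBlocks c w * (3 * c + 1) + 2 * (c + 1) := by
  have h₁ := length_lt_numBlocks_add_two_mul c w
  have h₂ : (numBlocks c w + 2) * (c + 1) = numBlocks c w * (c + 1) + 2 * (c + 1) := by ring
  rw [length_padded]
  omega

theorem segments_prefix_padded (w : List (Letter m)) {k : ℕ} (hk : k ≤ numBlocks c w) :
    segments L c i₀ w k <+: padded L c i₀ w := by
  have hmono : ∀ j ≥ k, segments L c i₀ w k <+: segments L c i₀ w j := fun j hj => by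
    induction j, hj using Nat.le_induction with
    | base => exact List.prefix_refl _
    | succ j _ ih => exact (segments_succ L c i₀ w j).symm ▸ ih.trans (List.prefix_append _ _)
  exact (hmono _ hk).trans (List.prefix_append _ _)

theorem segments_congr {w₁ w₂ : List (Letter m)} {k : ℕ}
    (h : w₁.take (k * (c + 1)) = w₂.take (k * (c + 1))) :
    segments L c i₀ w₁ k = segments L c i₀ w₂ k := by
  refine congrArg List.flatten (List.map_congr_left fun j hj => ?_)
  have hj : (j + 1) * (c + 1) ≤ k * (c + 1) :=
    Nat.mul_le_mul_right _ (List.mem_range.mp hj)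
  have htake : w₁.take ((j + 1) * (c + 1)) = w₂.take ((j + 1) * (c + 1)) := by
    rw [← Nat.min_eq_left hj, ← List.take_take, h, List.take_take]
  rw [segment, segment, htake]

theorem padded_take_append_completion (w : List (Letter m)) {k : ℕ}
    (hk : k + 1 ≤ numBlocks c w) :
    padded L c i₀ (w.take ((k + 1) * (c + 1)) ++ completion L c (w.take ((k + 1) * (c + 1)))) =
      segments L c i₀ w k ++ ((w.take ((k + 1) * (c + 1))).drop (k * (c + 1)) ++
        completion L c (w.take ((k + 1) * (c + 1)))) := by
  set u := w.take ((k + 1) * (c + 1))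
  set x := completion L c u
  have hx : x.length ≤ c := length_completion_le L c u
  have hu : u.length = k * (c + 1) + (c + 1) := by
    rw [List.length_take,
      Nat.min_eq_left ((Nat.mul_le_mul_right _ hk).trans (numBlocks_mul_le c w))]
    ring
  have hblocks : numBlocks c (u ++ x) = k := by
    rw [numBlocks, List.length_append, hu, show k * (c + 1) + (c + 1) + x.length =
      x.length + (c + 1) * (k + 1) by ring, Nat.add_mul_div_left _ _ (Nat.succ_pos c),
      Nat.div_eq_of_lt (by omega)]
    omega
  have hku : k * (c + 1) ≤ u.length := by omega
  rw [padded, hblocks, List.drop_append_of_le_length hku]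
  congr 1
  apply segments_congr
  rw [List.take_append_of_le_length hku, List.take_take, Nat.min_eq_left (by nlinarith)]

theorem padded_take_append_completion_prefix (w : List (Letter m)) {k : ℕ}
    (hk : k + 1 ≤ numBlocks c w) :
    padded L c i₀ (w.take ((k + 1) * (c + 1)) ++ completion L c (w.take ((k + 1) * (c + 1))))
      <+: padded L c i₀ w := by
  rw [padded_take_append_completion L c i₀ w hk]
  refine List.IsPrefix.trans ?_ (segments_prefix_padded L c i₀ w hk)
  simp only [segments_succ, segment, detour, List.append_assoc, List.prefix_append_right_inj]
  exact List.prefix_append _ _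

theorem length_padded_take_append_completion (w : List (Letter m)) {k : ℕ}
    (hk : k + 1 ≤ numBlocks c w) :
    (padded L c i₀ (w.take ((k + 1) * (c + 1)) ++
      completion L c (w.take ((k + 1) * (c + 1))))).length =
      k * (3 * c + 1) + (c + 1) + (completion L c (w.take ((k + 1) * (c + 1)))).length := by
  have hlen : (k + 1) * (c + 1) ≤ w.length :=
    (Nat.mul_le_mul_right _ hk).trans (numBlocks_mul_le c w)
  rw [padded_take_append_completion L c i₀ w hk, List.length_append, List.length_append,
    length_segments L c i₀ w (by omega), List.length_drop, List.length_take,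
    Nat.min_eq_left hlen]
  ring_nf
  omega

end Padding

namespace Padding

variable {G : Type*} [Group G] {m : ℕ} (A : Fin m → G) (L : Set (List (Letter m))) {c : ℕ}
  (i₀ : Fin m)

theorem exists_prefix_padded_mem (hc : 0 < c) (hqr : Quasiregular L c) {w : List (Letter m)}
    (hw : w ∈ L) {t : ℕ} (ht : t ≤ (padded L c i₀ w).length) :
    ∃ p ∈ padded L c i₀ '' L,
      p <+: padded L c i₀ w ∧ t ≤ p.length ∧ p.length ≤ t + 4 * c := by
  -- `j` is chosen so that the padded completion of the prefix ending with block `j`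
  -- has length in `[t, t + 4c]`
  set j := (t + 5 * c) / (3 * c + 1) - 1
  have hj : t + 2 * c ≤ j * (3 * c + 1) + (3 * c + 1) ∧
      j * (3 * c + 1) + (3 * c + 1) ≤ t + 5 * c := by
    have h₁ := Nat.div_mul_le_self (t + 5 * c) (3 * c + 1)
    have h₂ := Nat.lt_div_mul_add (a := t + 5 * c) (b := 3 * c + 1) (by omega)
    have h₃ : 1 ≤ (t + 5 * c) / (3 * c + 1) := (Nat.one_le_div_iff (by omega)).mpr (by omega)
    rw [← Nat.succ_mul, show j.succ = (t + 5 * c) / (3 * c + 1) by omega]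
    omega
  by_cases hjK : j + 1 ≤ numBlocks c w
  · have hux := append_completion_mem L c (hqr w hw _ (w.take_prefix ((j + 1) * (c + 1))))
    refine ⟨_, Set.mem_image_of_mem _ hux,
      padded_take_append_completion_prefix L c i₀ w hjK, ?_⟩
    have hx := length_completion_le L c (w.take ((j + 1) * (c + 1)))
    rw [length_padded_take_append_completion L c i₀ w hjK]
    omega
  · refine ⟨_, Set.mem_image_of_mem _ hw, List.prefix_refl _, ht, ?_⟩
    have hK : numBlocks c w * (3 * c + 1) ≤ j * (3 * c + 1) :=
      Nat.mul_le_mul_right _ (by omega)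
    have := length_padded_lt L c i₀ w
    omega

theorem wordDist_take_padded_le (hc : 0 < c) (w : List (Letter m)) (t : ℕ) :
    wordDist A (wordEval A ((padded L c i₀ w).take t))
      (wordEval A (w.take (t / (3 * c + 1) * (c + 1)))) ≤ 3 * c := by
  set q := t / (3 * c + 1)
  have ht : t = q * (3 * c + 1) + t % (3 * c + 1) := by
    rw [mul_comm]; exact (Nat.div_add_mod t (3 * c + 1)).symm
  have hr := Nat.mod_lt t (show 3 * c + 1 > 0 by omega)
  by_cases hq : q ≤ numBlocks c w
  · obtain ⟨s, hs⟩ := segments_prefix_padded L c i₀ w hq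
    rw [← hs, ht, ← length_segments L c i₀ w hq, List.take_length_add_append,
      ← wordEval_segments A L c i₀]
    refine (wordDist_wordEval_append_le _ _).trans ?_
    have := List.length_take_le (t % (3 * c + 1)) s
    omega
  · have hK : numBlocks c w * (3 * c + 1) + (3 * c + 1) ≤ q * (3 * c + 1) := by
      rw [← Nat.succ_mul]; exact Nat.mul_le_mul_right _ (by omega)
    have hK' : numBlocks c w * (c + 1) + (c + 1) ≤ q * (c + 1) := by
      rw [← Nat.succ_mul]; exact Nat.mul_le_mul_right _ (by omega)
    have hw := length_lt_numBlocks_add_two_mul c w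
    have hexp : (numBlocks c w + 2) * (c + 1) = numBlocks c w * (c + 1) + 2 * (c + 1) := by ring
    have hlen := length_padded_lt L c i₀ w
    rw [List.take_of_length_le (by omega), wordEval_padded]
    calc _ = wordDist A (wordEval A (w.take (q * (c + 1)) ++ w.drop (q * (c + 1))))
          (wordEval A (w.take (q * (c + 1)))) := by rw [List.take_append_drop]
      _ ≤ (w.drop (q * (c + 1))).length := wordDist_wordEval_append_le _ _
      _ ≤ 3 * c := by rw [List.length_drop]; omega

theorem ftFun_image_padded_le (hc : 0 < c) (hA : Function.Surjective (wordEval A)) (n : ℕ) :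
    ftFun A (padded L c i₀ '' L) n ≤ ftFun A L n + 6 * c := by
  refine csSup_le' ?_
  rintro _ ⟨t, ht, _, ⟨w₁, hw₁, rfl⟩, _, ⟨w₂, hw₂, rfl⟩, i, hadj, rfl⟩
  rw [wordEval_padded, wordEval_padded] at hadj
  set τ := t / (3 * c + 1) * (c + 1)
  have hτ : τ ≤ n := calc
    τ ≤ t / (3 * c + 1) * (3 * c + 1) := Nat.mul_le_mul_left _ (by omega)
    _ ≤ n := (Nat.div_mul_le_self t _).trans ht
  have h₁ := wordDist_take_padded_le A L i₀ hc w₁ t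
  have h₂ := wordDist_take_padded_le A L i₀ hc w₂ t
  rw [wordDist_comm hA] at h₂
  calc _ ≤ wordDist A (wordEval A ((padded L c i₀ w₁).take t)) (wordEval A (w₁.take τ)) +
        (wordDist A (wordEval A (w₁.take τ)) (wordEval A (w₂.take τ)) +
          wordDist A (wordEval A (w₂.take τ)) (wordEval A ((padded L c i₀ w₂).take t))) :=
        (wordDist_triangle hA _ _ _).trans (by gcongr; exact wordDist_triangle hA _ _ _)
    _ ≤ 3 * c + (ftFun A L n + 3 * c) := by gcongr; exact le_ftFun hτ hw₁ hw₂ hadj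
    _ = ftFun A L n + 6 * c := by ring

theorem eventually_ftFun_image_padded_le_mul (hc : 0 < c) (hL : IsNormalForm A L) :
    ∃ N, ∀ n ≥ N,
      (ftFun A (padded L c i₀ '' L) n : ℝ) ≤ (6 * c + 1 : ℕ) * ftFun A L n := by
  by_cases htriv : ∀ i, A i = 1
  · refine ⟨0, fun n _ => ?_⟩
    rw [ftFun_eq_zero_of_forall_eq_one hL.surjective htriv, Nat.cast_zero]
    positivity
  obtain ⟨i, hi⟩ := not_forall.mp htriv
  obtain ⟨N, hN⟩ := eventually_one_le_ftFun hL hi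
  refine ⟨N, fun n hn => ?_⟩
  have h₁ := ftFun_image_padded_le A L i₀ hc hL.surjective n
  have h₂ := hN n hn
  exact_mod_cast (by nlinarith : ftFun A (padded L c i₀ '' L) n ≤ (6 * c + 1) * ftFun A L n)

end Padding

theorem quasiregular_to_quasiprefixClosed_general {G : Type*} [Group G] {m : ℕ}
    (A : Fin m → G) (L : Set (List (Letter m))) (hL : IsNormalForm A L)
    (c : ℕ) (hqr : Quasiregular L c)
    (f : ℕ → ℝ)
    (hftp : FPreceq (fun n => (ftFun A L n : ℝ)) f) :
    ∃ L' : Set (List (Letter m)), IsNormalForm A L' ∧ QuasiPrefixClosed L' (4 * c) ∧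
      FPreceq (fun n => (ftFun A L' n : ℝ)) f := by
  obtain rfl | hc := Nat.eq_zero_or_pos c
  · exact ⟨L, hL, hqr.prefixClosed.quasiPrefixClosed _, hftp⟩
  obtain hm | ⟨⟨i₀⟩⟩ := isEmpty_or_nonempty (Fin m)
  · exact ⟨L, hL, (prefixClosed_of_isEmpty L).quasiPrefixClosed _, hftp⟩
  obtain ⟨N, hN⟩ := Padding.eventually_ftFun_image_padded_le_mul A L i₀ hc hL
  refine ⟨Padding.padded L c i₀ '' L, hL.image A (Padding.wordEval_padded A L c i₀), ?_,
    hftp.of_le_mul (by omega) hN⟩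
  refine quasiPrefixClosed_of_exists_prefix_mem ?_
  rintro _ ⟨w, hw, rfl⟩ t ht
  exact Padding.exists_prefix_padded_mem L i₀ hc hqr hw ht

/-- Suppose `L ⊆ S*` defines a quasiregular normal form of `G` with constant `c ≥ 0`
which satisfies the `f(n)`-fellow traveler property (`f` nondecreasing, `f ≪ 𝔦`,
and `s ⪯ f`). Then there is a language `L' ⊆ S*` defining a quasiprefix-closed
normal form of `G` with constant `C = 4c` that also satisfies the `f(n)`-fellow
traveler property. -/
theorem quasiregular_to_quasiprefixClosed {G : Type*} [Group G] [Infinite G] {m : ℕ}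
    (A : Fin m → G) (L : Set (List (Letter m))) (hL : IsNormalForm A L)
    (c : ℕ) (hqr : Quasiregular L c)
    (f : ℕ → ℝ) (hmono : Monotone f) (hnonneg : ∀ n, 0 ≤ f n)
    (hll : FLl f (fun n => (n : ℝ)))
    (hftp : FPreceq (fun n => (ftFun A L n : ℝ)) f) :
    ∃ L' : Set (List (Letter m)), IsNormalForm A L' ∧ QuasiPrefixClosed L' (4 * c) ∧
      FPreceq (fun n => (ftFun A L' n : ℝ)) f :=
  quasiregular_to_quasiprefixClosed_general A L hL c hqr f hftp
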